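/- arXiv:2208.01628 — 5 statements merged into one kernel-verified Lean document; each statement's English description precedes it below -/
import Mathlib

section
/- Let ω = e^{2πi/3}, Λ = ℤω ⊕ ℤ, ⟨z,w⟩ := Re(z·conj(w)), K = 4π/3 and z_S = i/√3. Suppose U : ℂ → ℂ satisfies U(z+γ) = e^{i⟨γ,K⟩}U(z) for all γ ∈ Λ and all z ∈ ℂ, and U(ωz) = ωU(z) for all z ∈ ℂ. Then U(z_S + ωζ) = ω̄·U(z_S + ζ) for all ζ ∈ ℂ, and in particular U vanishes at the stacking point of high symmetry: U(z_S) = 0. -/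
open Complex

noncomputable section

/-- `ω = e^{2πi/3}`. -/
def ω : ℂ := Complex.exp (2 * (Real.pi : ℂ) * Complex.I / 3)

/-- The hexagonal lattice `Λ = ℤω ⊕ ℤ`. -/
def inΛ (γ : ℂ) : Prop := ∃ m n : ℤ, γ = (m : ℂ) * ω + (n : ℂ)

/-- The pairing `⟨z,w⟩ = Re (z ⬝ conj w)`. -/
def pairing (z w : ℂ) : ℝ := (z * (starRingEnd ℂ) w).re

/-- The Dirac momentum `K = 4π/3`. -/
def Kpt : ℂ := 4 * (Real.pi : ℂ) / 3

/-- The stacking point `z_S = i/√3`. -/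
def zS : ℂ := Complex.I / (Real.sqrt 3 : ℂ)

/-! The rotation `z ↦ ωz` fixes `z_S` up to the lattice vector `1 + ω`, on which the Bloch
phase `e^{i⟨1+ω,K⟩}` is `ω`. Hence rotating about `z_S` multiplies `U` by `ω · ω = ω̄`, and
`U(z_S) = ω̄ U(z_S)` with `ω̄ ≠ 1` forces `U(z_S) = 0`. -/

open ComplexConjugate

lemma omega_eq : ω = -1 / 2 + (Real.sqrt 3 / 2 : ℝ) * I := by
  have hθ : 2 * (Real.pi : ℂ) * I / 3 = (Real.pi - Real.pi / 3 : ℝ) * I := by push_cast; ring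
  rw [ω, hθ, exp_mul_I, ← ofReal_cos, ← ofReal_sin, Real.cos_pi_sub, Real.sin_pi_sub,
    Real.cos_pi_div_three, Real.sin_pi_div_three]
  push_cast
  ring

lemma re_omega : ω.re = -1 / 2 := by simp [omega_eq]

lemma im_omega : ω.im = Real.sqrt 3 / 2 := by simp [omega_eq]

lemma sqrt_three_mul_self : (Real.sqrt 3 : ℂ) * Real.sqrt 3 = 3 := by
  exact_mod_cast Real.mul_self_sqrt (by norm_num : (0 : ℝ) ≤ 3)

lemma conj_omega : conj ω = ω * ω := by
  rw [omega_eq]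
  simp only [map_add, map_mul, map_div₀, map_neg, map_one, map_ofNat, conj_I, conj_ofReal]
  push_cast
  linear_combination (-I ^ 2 / 4) * sqrt_three_mul_self - (3 / 4 : ℂ) * I_sq

lemma omega_mul_self_ne_one : ω * ω ≠ 1 := by
  rw [← conj_omega]
  intro h
  simpa [im_omega] using congrArg im h

lemma zS_eq : zS = (Real.sqrt 3 / 3 : ℝ) * I := by
  have hsqrt : (Real.sqrt 3 : ℂ) ≠ 0 := by exact_mod_cast (by positivity : Real.sqrt 3 ≠ 0)
  rw [zS, div_eq_iff hsqrt]
  push_cast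
  linear_combination (-I / 3) * sqrt_three_mul_self

lemma omega_mul_zS : ω * zS + (1 + ω) = zS := by
  rw [omega_eq, zS_eq]
  push_cast
  linear_combination (I ^ 2 / 6) * sqrt_three_mul_self + (1 / 2 : ℂ) * I_sq

lemma inΛ_one_add_omega : inΛ (1 + ω) := ⟨1, 1, by push_cast; ring⟩

lemma exp_I_mul_pairing_one_add_omega_Kpt : exp (I * pairing (1 + ω) Kpt) = ω := by
  have hpairing : pairing (1 + ω) Kpt = 2 * Real.pi / 3 := by
    have hK : Kpt = (4 * Real.pi / 3 : ℝ) := by rw [Kpt]; push_cast; ring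
    rw [pairing, hK, conj_ofReal, re_mul_ofReal, add_re, one_re, re_omega]
    ring
  rw [hpairing, ω]
  push_cast
  ring_nf

section RotationFixedPoint

variable {U : ℂ → ℂ} {a c γ p : ℂ}

lemma apply_add_mul_of_rotation_fixed (hrot : ∀ z, U (a * z) = a * U z)
    (htrans : ∀ z, U (z + γ) = c * U z) (hp : a * p + γ = p) (ζ : ℂ) :
    U (p + a * ζ) = c * a * U (p + ζ) := by
  rw [show p + a * ζ = a * (p + ζ) + γ by linear_combination -hp, htrans, hrot, mul_assoc]

lemma apply_eq_zero_of_rotation_fixed (hrot : ∀ z, U (a * z) = a * U z)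
    (htrans : ∀ z, U (z + γ) = c * U z) (hp : a * p + γ = p) (hca : c * a ≠ 1) : U p = 0 := by
  have h := apply_add_mul_of_rotation_fixed hrot htrans hp 0
  rw [mul_zero, add_zero] at h
  have : (1 - c * a) * U p = 0 := by rw [sub_mul, one_mul, ← h, sub_self]
  exact (mul_eq_zero.mp this).resolve_left (sub_ne_zero.mpr hca.symm)

end RotationFixedPoint

theorem stmt0 (U : ℂ → ℂ)
    (hU1 : ∀ γ : ℂ, inΛ γ → ∀ z : ℂ,
      U (z + γ) = Complex.exp (Complex.I * (pairing γ Kpt : ℂ)) * U z)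
    (hU2 : ∀ z : ℂ, U (ω * z) = ω * U z) :
    (∀ ζ : ℂ, U (zS + ω * ζ) = (starRingEnd ℂ) ω * U (zS + ζ)) ∧ U zS = 0 := by
  have htrans : ∀ z, U (z + (1 + ω)) = ω * U z := by
    simpa only [exp_I_mul_pairing_one_add_omega_Kpt] using hU1 (1 + ω) inΛ_one_add_omega
  rw [conj_omega]
  exact ⟨apply_add_mul_of_rotation_fixed hU2 htrans omega_mul_zS,
    apply_eq_zero_of_rotation_fixed hU2 htrans omega_mul_zS omega_mul_self_ne_one⟩

end
end

section
/- Let α, k ∈ ℂ, let U : ℂ → ℂ be any function, and let u = (u₁,u₂) and v = (v₁,v₂) be differentiable maps ℂ → ℂ² satisfying (D(α)+k)u = 0 and (D(α)+k)v = 0 on ℂ, i.e. 2D_{z̄}u₁ + αU(z)u₂ + ku₁ = 0, αU(−z)u₁ + 2D_{z̄}u₂ + ku₂ = 0, and similarly for v. Then the Wronskian W(z) := u₁(z)v₂(z) − u₂(z)v₁(z) satisfies 2D_{z̄}W + 2kW = 0 on ℂ. -/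
/-!
By the product rule, `2D_{z̄}W = v₂·2D_{z̄}u₁ + u₁·2D_{z̄}v₂ − v₁·2D_{z̄}u₂ − u₂·2D_{z̄}v₁`.
Substituting the equations, the potential terms `αU(z)u₂v₂` and `αU(−z)u₁v₁` cancel in pairs,
while the spectral terms add up to `−2kW`.
-/

open Complex

noncomputable section

/-- `2 D_{z̄} u = -i (∂_x u + i ∂_y u)`. -/
def Dbar2 (u : ℂ → ℂ) : ℂ → ℂ := fun z =>
  -Complex.I * (fderiv ℝ u z 1 + Complex.I * fderiv ℝ u z Complex.I)

lemma Dbar2_mul {f g : ℂ → ℂ} {z : ℂ} (hf : DifferentiableAt ℝ f z)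
    (hg : DifferentiableAt ℝ g z) :
    Dbar2 (fun w => f w * g w) z = Dbar2 f z * g z + f z * Dbar2 g z := by
  simp only [Dbar2, fderiv_fun_mul hf hg, add_apply,
    smul_apply, smul_eq_mul]
  ring

lemma Dbar2_sub {f g : ℂ → ℂ} {z : ℂ} (hf : DifferentiableAt ℝ f z)
    (hg : DifferentiableAt ℝ g z) :
    Dbar2 (fun w => f w - g w) z = Dbar2 f z - Dbar2 g z := by
  simp only [Dbar2, fderiv_fun_sub hf hg, sub_apply]
  ring

lemma Dbar2_wronskian {u₁ u₂ v₁ v₂ : ℂ → ℂ} {z : ℂ}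
    (hu₁ : DifferentiableAt ℝ u₁ z) (hu₂ : DifferentiableAt ℝ u₂ z)
    (hv₁ : DifferentiableAt ℝ v₁ z) (hv₂ : DifferentiableAt ℝ v₂ z) :
    Dbar2 (fun w => u₁ w * v₂ w - u₂ w * v₁ w) z =
      Dbar2 u₁ z * v₂ z + u₁ z * Dbar2 v₂ z - (Dbar2 u₂ z * v₁ z + u₂ z * Dbar2 v₁ z) := by
  rw [Dbar2_sub (hu₁.fun_mul hv₂) (hu₂.fun_mul hv₁), Dbar2_mul hu₁ hv₂, Dbar2_mul hu₂ hv₁]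

theorem stmt8 (α k : ℂ) (U : ℂ → ℂ) (u₁ u₂ v₁ v₂ : ℂ → ℂ)
    (hu₁ : Differentiable ℝ u₁) (hu₂ : Differentiable ℝ u₂)
    (hv₁ : Differentiable ℝ v₁) (hv₂ : Differentiable ℝ v₂)
    (hueq1 : ∀ z : ℂ, Dbar2 u₁ z + α * U z * u₂ z + k * u₁ z = 0)
    (hueq2 : ∀ z : ℂ, α * U (-z) * u₁ z + Dbar2 u₂ z + k * u₂ z = 0)
    (hveq1 : ∀ z : ℂ, Dbar2 v₁ z + α * U z * v₂ z + k * v₁ z = 0)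
    (hveq2 : ∀ z : ℂ, α * U (-z) * v₁ z + Dbar2 v₂ z + k * v₂ z = 0) :
    ∀ z : ℂ, Dbar2 (fun w => u₁ w * v₂ w - u₂ w * v₁ w) z
        + 2 * k * (u₁ z * v₂ z - u₂ z * v₁ z) = 0 := by
  intro z
  rw [Dbar2_wronskian (hu₁ z) (hu₂ z) (hv₁ z) (hv₂ z)]
  linear_combination v₂ z * hueq1 z + u₁ z * hveq2 z - v₁ z * hueq2 z - u₂ z * hveq1 z

end
end

section
/- Let a : ℕ×ℕ → ℂ and g : ℕ×ℕ×ℕ×ℕ → ℂ. Assume: (i) a(k,ℓ) = 0 whenever k ≢ ℓ (mod 3); (ii) a(0,0) = 0; (iii) for all k,ℓ ≥ 0, a(k,ℓ+1) = ∑_{r ≤ k−1, s ≤ ℓ} g(k,ℓ,r,s)·a(r,s) (with the convention that the sum is empty when k = 0). Then a(k,ℓ) = 0 for all k ≤ 2 and all ℓ ≥ 0. -/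
theorem stmt11 (a : ℕ × ℕ → ℂ) (g : ℕ × ℕ × ℕ × ℕ → ℂ)
    (h1 : ∀ k ℓ : ℕ, ¬ (k % 3 = ℓ % 3) → a (k, ℓ) = 0)
    (h2 : a (0, 0) = 0)
    (h3 : ∀ k ℓ : ℕ, a (k, ℓ + 1) =
      ∑ r ∈ Finset.range k, ∑ s ∈ Finset.range (ℓ + 1), g (k, ℓ, r, s) * a (r, s)) :
    ∀ k ℓ : ℕ, k ≤ 2 → a (k, ℓ) = 0 := by
  have h0 : ∀ ℓ, a (0, ℓ) = 0 := by
    intro ℓ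
    cases ℓ with
    | zero => exact h2
    | succ n => simp [h3 0 n]
  have hA : ∀ ℓ, a (1, ℓ) = 0 := by
    intro ℓ
    cases ℓ with
    | zero => exact h1 1 0 (by decide)
    | succ n =>
      rw [h3 1 n]
      apply Finset.sum_eq_zero
      intro r hr
      simp only [Finset.mem_range] at hr
      have : r = 0 := by omega
      subst this
      apply Finset.sum_eq_zero
      intro s _
      rw [h0 s, mul_zero]
  have hB : ∀ ℓ, a (2, ℓ) = 0 := by
    intro ℓ
    cases ℓ with
    | zero => exact h1 2 0 (by decide)
    | succ n =>
      rw [h3 2 n]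
      apply Finset.sum_eq_zero
      intro r hr
      apply Finset.sum_eq_zero
      intro s _
      simp only [Finset.mem_range] at hr
      interval_cases r
      · rw [h0 s, mul_zero]
      · rw [hA s, mul_zero]
  intro k ℓ hk
  interval_cases k
  · exact h0 ℓ
  · exact hA ℓ
  · exact hB ℓ
end

section
/- Let ω = e^{2πi/3}, let H be a complex Hilbert space, let R : H → H be a complex linear isometry, let u : ℂ → H be holomorphic with u(k) ≠ 0 for all k, and suppose there is a function ρ : ℂ → ℂ with u(ωk) = ρ(k)·R(u(k)) for all k ∈ ℂ. Define Θ(k) := (1/4)·Δ(log‖u(k)‖²), with Δ the Laplacian in the identification ℂ ≅ ℝ². Then Θ(ωk) = Θ(k) for all k ∈ ℂ. -/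
/-!
Since `R` is an isometry, `‖u (ω k)‖² = |ρ k|² ‖u k‖²`, so `log ‖u (ω ·)‖²` differs from
`log ‖u‖²` by `2 log |ρ|`. Near any point `k`, `ρ` is the quotient
`⟪R (u k), u (ω ·)⟫ / ⟪R (u k), R (u ·)⟫` of holomorphic functions, and it has no zeros, so
`log |ρ|` is harmonic. Finally, the Laplacian commutes with the rotation `k ↦ ω k`.
-/

open Complex

noncomputable section

/-- The Laplacian `Δ = ∂²_{k₁} + ∂²_{k₂}` of a function on `ℂ ≅ ℝ²`. -/
def lap (f : ℂ → ℝ) : ℂ → ℝ := fun z =>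
  fderiv ℝ (fun w => fderiv ℝ f w 1) z 1 +
  fderiv ℝ (fun w => fderiv ℝ f w Complex.I) z Complex.I

open InnerProductSpace Laplacian
open scoped ComplexInnerProductSpace

theorem laplacian_comp_linearIsometryEquiv {E E' F : Type*} [NormedAddCommGroup E]
    [InnerProductSpace ℝ E] [FiniteDimensional ℝ E] [NormedAddCommGroup E']
    [InnerProductSpace ℝ E'] [FiniteDimensional ℝ E'] [NormedAddCommGroup F] [NormedSpace ℝ F]
    (L : E ≃ₗᵢ[ℝ] E') (f : E' → F) (x : E) :
    Δ (f ∘ L) x = Δ f (L x) := by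
  let b := stdOrthonormalBasis ℝ E
  have hcomp : iteratedFDeriv ℝ 2 (f ∘ L) x =
      (iteratedFDeriv ℝ 2 f (L x)).compContinuousLinearMap fun _ => (L : E →L[ℝ] E') := by
    simpa [iteratedFDerivWithin_univ] using
      L.toContinuousLinearEquiv.iteratedFDerivWithin_comp_right f uniqueDiffOn_univ
        (Set.mem_univ (L x)) 2
  simp only [laplacian_eq_iteratedFDeriv_orthonormalBasis (f ∘ L) b,
    laplacian_eq_iteratedFDeriv_orthonormalBasis f (b.map L), hcomp,
    ContinuousMultilinearMap.compContinuousLinearMap_apply]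
  refine Finset.sum_congr rfl fun i _ => congrArg _ ?_
  ext j
  fin_cases j <;> rfl

theorem lap_eq_laplacian {f : ℂ → ℝ} {z : ℂ} (hf : ContDiffAt ℝ 2 f z) : lap f z = Δ f z := by
  have hd : DifferentiableAt ℝ (fderiv ℝ f) z :=
    (hf.fderiv_right (m := 1) (by norm_num)).differentiableAt (by norm_num)
  simp [lap, laplacian_eq_iteratedFDeriv_complexPlane, iteratedFDeriv_two_apply,
    fderiv_clm_apply hd (differentiableAt_const _)]

theorem ω_eq_coe_circleExp : ω = (Circle.exp (2 * Real.pi / 3) : ℂ) := by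
  rw [Circle.coe_exp, ω]
  push_cast
  ring_nf

theorem analyticAt_of_forall_eq_smul {E : Type*} [NormedAddCommGroup E] [InnerProductSpace ℂ E]
    {v U : ℂ → E} {ρ : ℂ → ℂ} (hv : Differentiable ℂ v) (hU : Differentiable ℂ U)
    (hρ : ∀ w, v w = ρ w • U w) {z : ℂ} (hz : U z ≠ 0) : AnalyticAt ℂ ρ z := by
  have hd : ∀ {g : ℂ → E}, Differentiable ℂ g → Differentiable ℂ fun w => ⟪U z, g w⟫_ℂ :=
    fun hg => (innerSL ℂ (U z)).differentiable.comp hg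
  let s := {w | ⟪U z, U w⟫_ℂ ≠ 0}
  have hs : IsOpen s := isOpen_ne_fun (hd hU).continuous continuous_const
  have hρs : DifferentiableOn ℂ ρ s := by
    refine ((hd hv).differentiableOn.div (hd hU).differentiableOn fun w hw => hw).congr
      fun w (hw : ⟪U z, U w⟫_ℂ ≠ 0) => ?_
    rw [Pi.div_apply, hρ w, inner_smul_right, mul_div_cancel_right₀ _ hw]
  exact (hρs.analyticOnNhd hs) z (inner_self_ne_zero.mpr hz)

theorem stmt16 {H : Type*} [NormedAddCommGroup H] [InnerProductSpace ℂ H] [CompleteSpace H]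
    (R : H →ₗᵢ[ℂ] H) (u : ℂ → H) (hu : Differentiable ℂ u) (hne : ∀ k : ℂ, u k ≠ 0)
    (ρ : ℂ → ℂ) (hρ : ∀ k : ℂ, u (ω * k) = ρ k • R (u k)) :
    ∀ k : ℂ,
      lap (fun w => Real.log (‖u w‖ ^ 2)) (ω * k) / 4 =
      lap (fun w => Real.log (‖u w‖ ^ 2)) k / 4 := by
  intro k
  set f : ℂ → ℝ := fun w => Real.log (‖u w‖ ^ 2)
  have hf : ∀ z, ContDiffAt ℝ 2 f z := fun z =>
    (((hu.contDiff (n := 2)).restrict_scalars ℝ).contDiffAt.norm_sq ℂ).log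
      (pow_ne_zero 2 (norm_ne_zero_iff.mpr (hne z)))
  have hρ_ne : ∀ w, ρ w ≠ 0 := fun w h0 => hne (ω * w) (by rw [hρ w, h0, zero_smul])
  have hρ_an : AnalyticAt ℂ ρ k :=
    analyticAt_of_forall_eq_smul (v := fun w => u (ω * w)) (U := fun w => R (u w))
      (hu.comp (differentiable_id.const_mul ω)) (R.toContinuousLinearMap.differentiable.comp hu)
      hρ ((map_ne_zero_iff R R.injective).mpr (hne k))
  let L := rotation (Circle.exp (2 * Real.pi / 3))
  have hL : ∀ w, L w = ω * w := fun w => by rw [rotation_apply, ω_eq_coe_circleExp]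
  have hsplit : f ∘ L = (2 : ℝ) • (fun w => Real.log ‖ρ w‖) + f := by
    funext w
    simp only [f, Function.comp_apply, hL, hρ w, norm_smul, R.norm_map, mul_pow, Pi.add_apply,
      Pi.smul_apply, smul_eq_mul]
    rw [Real.log_mul (by simpa using hρ_ne w) (by simpa using hne w), Real.log_pow]
    push_cast
    ring
  have hharm := (hρ_an.harmonicAt_log_norm (hρ_ne k)).const_smul (c := (2 : ℝ))
  suffices lap f (ω * k) = lap f k by rw [this]
  calc lap f (ω * k) = Δ f (L k) := by rw [lap_eq_laplacian (hf _), hL]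
    _ = Δ ((2 : ℝ) • (fun w => Real.log ‖ρ w‖)) k + Δ f k := by
      rw [← laplacian_comp_linearIsometryEquiv, hsplit, hharm.1.laplacian_add (hf k)]
    _ = lap f k := by rw [hharm.2.self_of_nhds, Pi.zero_apply, zero_add, lap_eq_laplacian (hf k)]

end
end

section
/- Let ω = e^{2πi/3} and F := {t + sω : t,s ∈ [0,1)}. Let h : ℂ → (0,∞) be smooth and let e₁, e_ω : ℂ → ℂ∖{0} be entire (holomorphic and nowhere zero) such that for all z ∈ ℂ: h(z) = h(z+1)·|e₁(z)|², h(z) = h(z+ω)·|e_ω(z)|², and e₁(z)·e_ω(z+1) = e_ω(z)·e₁(z+ω). Then −(1/4π)·∫_F Δ(log h)(z) dm(z) is an integer, where Δ is the Laplacian on ℂ ≅ ℝ² and dm is Lebesgue measure. -/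
open Complex MeasureTheory

noncomputable section

/-- The fundamental domain `F = {t + sω : t,s ∈ [0,1)}` of the lattice `ℤ ⊕ ℤω`. -/
def Fdom : Set ℂ :=
  {z : ℂ | ∃ t s : ℝ, t ∈ Set.Ico (0 : ℝ) 1 ∧ s ∈ Set.Ico (0 : ℝ) 1 ∧
    z = (t : ℂ) + (s : ℂ) * ω}

/-! Auxiliary lemmas -/

lemma omega_eq_s18 : ω = Complex.exp ((2 * Real.pi / 3 : ℝ) * Complex.I) := by
  unfold ω; norm_num; ring_nf

lemma omega_im_pos : 0 < ω.im := by
  rw [omega_eq_s18, Complex.exp_ofReal_mul_I_im]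
  apply Real.sin_pos_of_pos_of_lt_pi
  · positivity
  · nlinarith [Real.pi_pos]

lemma logAbs_hasFDerivAt {f : ℂ → ℂ} (hf : Differentiable ℂ f) (h0 : ∀ z, f z ≠ 0) (z : ℂ) :
    HasFDerivAt (fun w => Real.log (‖f w‖))
      (Complex.reCLM.comp
        (((1 : ℂ →L[ℂ] ℂ).smulRight (deriv f z / f z)).restrictScalars ℝ)) z := by
  have habs : ∀ w, Real.log (‖f w‖)
      = Real.log (‖f z‖) + (Complex.log (f w / f z)).re := by
    intro w
    rw [Complex.log_re, norm_div, Real.log_div (by simpa using h0 w) (by simpa using h0 z)]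
    ring
  have h1 : f z / f z = 1 := div_self (h0 z)
  have hdiv : HasDerivAt (fun w => f w / f z) (deriv f z / f z) z :=
    ((hf z).hasDerivAt).div_const (f z)
  have hlog : HasDerivAt (fun w => Complex.log (f w / f z)) (deriv f z / f z) z := by
    have := (Complex.hasDerivAt_log (show f z / f z ∈ Complex.slitPlane by
      rw [h1]; exact Complex.one_mem_slitPlane)).comp z hdiv
    simpa [h1, Function.comp_def] using this
  have hre : HasFDerivAt (fun w => (Complex.log (f w / f z)).re)
      (Complex.reCLM.comp (((1 : ℂ →L[ℂ] ℂ).smulRight (deriv f z / f z)).restrictScalars ℝ)) z :=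
    Complex.reCLM.hasFDerivAt.comp z (hlog.hasFDerivAt.restrictScalars ℝ)
  have := hre.const_add (Real.log (‖f z‖))
  simpa [← habs] using this

lemma exp_integral_logDeriv {f : ℂ → ℂ} (hf : Differentiable ℂ f) (h0 : ∀ z, f z ≠ 0) (v : ℂ) :
    Complex.exp (∫ s in (0:ℝ)..1, v * (deriv f ((s:ℝ) • v) / f ((s:ℝ) • v))) = f v / f 0 := by
  have hdc : Continuous (deriv f) := (hf.contDiff (n := 2)).continuous_deriv (by norm_num)
  set g : ℝ → ℂ := fun s => v * (deriv f ((s:ℝ) • v) / f ((s:ℝ) • v)) with hg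
  have hgc : Continuous g := by
    apply continuous_const.mul
    exact (hdc.comp (by continuity)).div (hf.continuous.comp (by continuity))
      (fun s => h0 _)
  set ψ : ℝ → ℂ := fun r => ∫ s in (0:ℝ)..r, g s with hψ
  have hψd : ∀ r, HasDerivAt ψ (g r) r := fun r =>
    intervalIntegral.integral_hasDerivAt_right (hgc.intervalIntegrable _ _)
      (hgc.stronglyMeasurableAtFilter _ _) hgc.continuousAt
  have hline : ∀ r : ℝ, HasDerivAt (fun r : ℝ => f ((r:ℝ) • v)) (v * deriv f ((r:ℝ) • v)) r := by
    intro r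
    have h1 : HasDerivAt (fun r : ℝ => (r:ℝ) • v) v r := by
      simpa using (hasDerivAt_id r).smul_const v
    have := HasDerivAt.scomp r (hf _).hasDerivAt h1
    simpa [smul_eq_mul, mul_comm, Function.comp_def] using this
  set φ : ℝ → ℂ := fun r => f ((r:ℝ) • v) * Complex.exp (-ψ r) with hφ
  have hφd : ∀ r, HasDerivAt φ 0 r := by
    intro r
    have h2 : HasDerivAt (fun r => Complex.exp (-ψ r)) (-(g r) * Complex.exp (-ψ r)) r := by
      have := ((hψd r).neg).cexp
      simpa [mul_comm] using this
    have := (hline r).mul h2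
    refine this.congr_deriv ?_
    rw [hg]
    field_simp [h0]
    ring
  have hconst : φ 1 = φ 0 :=
    is_const_of_deriv_eq_zero (fun r => (hφd r).differentiableAt)
      (fun r => (hφd r).deriv) 1 0
  have h01 : φ 0 = f 0 := by simp [hφ, hψ]
  have h11 : φ 1 = f v * Complex.exp (-ψ 1) := by simp [hφ]
  rw [h11, h01] at hconst
  have : f v = f 0 * Complex.exp (ψ 1) := by
    rw [← hconst, mul_assoc, ← Complex.exp_add]
    simp
  rw [this]
  field_simp [h0]
  rfl

/-! Linear change of variables -/

def Tmap : ℂ →L[ℝ] ℂ := Complex.reCLM.smulRight 1 + Complex.imCLM.smulRight ω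

lemma Tmap_apply (z : ℂ) : Tmap z = (z.re : ℂ) + (z.im : ℂ) * ω := by
  simp [Tmap, Complex.real_smul]

def Sset : Set ℂ := {z : ℂ | z.re ∈ Set.Ico (0:ℝ) 1 ∧ z.im ∈ Set.Ico (0:ℝ) 1}

lemma Sset_meas : MeasurableSet Sset := by
  have : Sset = Complex.re ⁻¹' (Set.Ico 0 1) ∩ Complex.im ⁻¹' (Set.Ico 0 1) := rfl
  rw [this]
  exact (measurableSet_Ico.preimage Complex.measurable_re).inter
    (measurableSet_Ico.preimage Complex.measurable_im)

lemma Tmap_im (z : ℂ) : (Tmap z).im = z.im * ω.im := by rw [Tmap_apply]; simp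

lemma Tmap_re (z : ℂ) : (Tmap z).re = z.re + z.im * ω.re := by rw [Tmap_apply]; simp

lemma Tmap_inj : Function.Injective Tmap := by
  intro z w hzw
  have h1 : z.im * ω.im = w.im * ω.im := by rw [← Tmap_im, ← Tmap_im, hzw]
  have him : z.im = w.im := by field_simp [omega_im_pos.ne'] at h1; exact h1
  have h2 : z.re + z.im * ω.re = w.re + w.im * ω.re := by rw [← Tmap_re, ← Tmap_re, hzw]
  have hre : z.re = w.re := by rw [him] at h2; linarith
  exact Complex.ext hre him

lemma Fdom_eq : Fdom = Tmap '' Sset := by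
  ext z
  constructor
  · rintro ⟨t, s, ht, hs, rfl⟩
    exact ⟨⟨t, s⟩, ⟨ht, hs⟩, by rw [Tmap_apply]⟩
  · rintro ⟨w, ⟨h1, h2⟩, rfl⟩
    exact ⟨w.re, w.im, h1, h2, (Tmap_apply w)⟩

lemma Tmap_det : (Tmap : ℂ →L[ℝ] ℂ).det = ω.im := by
  have hm : LinearMap.toMatrix Complex.basisOneI Complex.basisOneI
      (Tmap : ℂ →ₗ[ℝ] ℂ) = !![1, ω.re; 0, ω.im] := by
    ext i j
    rw [LinearMap.toMatrix_apply]
    fin_cases i <;> fin_cases j <;>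
      simp [Complex.coe_basisOneI, Complex.coe_basisOneI_repr, Tmap_apply]
  rw [ContinuousLinearMap.det, ← LinearMap.det_toMatrix Complex.basisOneI, hm,
    Matrix.det_fin_two_of]
  ring

lemma Sset_eq :
    Sset = Complex.measurableEquivRealProd.symm '' (Set.Ico (0:ℝ) 1 ×ˢ Set.Ico (0:ℝ) 1) := by
  ext z
  simp only [Set.mem_image, Complex.measurableEquivRealProd_symm_apply]
  constructor
  · rintro ⟨h1, h2⟩
    exact ⟨(z.re, z.im), ⟨h1, h2⟩, by simp [Complex.ext_iff]⟩
  · rintro ⟨p, ⟨h1, h2⟩, rfl⟩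
    exact ⟨by simpa using h1, by simpa using h2⟩

/-- integrability of continuous functions on the unit square -/
lemma intRect (F : ℝ × ℝ → ℝ) (hF : Continuous F) :
    IntegrableOn F (Set.Ico (0:ℝ) 1 ×ˢ Set.Ico (0:ℝ) 1) (volume.prod volume) := by
  rw [← Measure.volume_eq_prod]
  exact (hF.continuousOn.integrableOn_compact (isCompact_Icc.prod isCompact_Icc)).mono_set
    (Set.prod_mono Set.Ico_subset_Icc_self Set.Ico_subset_Icc_self)

/-- Reduction of an integral over `Fdom` to an integral over the unit square. -/
lemma integral_Fdom (f : ℂ → ℝ) (hf : Continuous f) :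
    ∫ z in Fdom, f z
      = ∫ p in Set.Ico (0:ℝ) 1 ×ˢ Set.Ico (0:ℝ) 1,
          ω.im * f ((p.1 : ℂ) + (p.2 : ℂ) * ω) ∂(volume.prod volume) := by
  rw [Fdom_eq]
  rw [integral_image_eq_integral_abs_det_fderiv_smul volume Sset_meas
    (fun x _ => Tmap.hasFDerivAt.hasFDerivWithinAt) (Tmap_inj.injOn) f]
  simp only [Tmap_det, abs_of_pos omega_im_pos, smul_eq_mul]
  rw [Sset_eq]
  rw [(Complex.volume_preserving_equiv_real_prod.symm).setIntegral_image_emb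
    (Complex.measurableEquivRealProd.symm.measurableEmbedding) _ _]
  rw [Measure.volume_eq_prod]
  congr 1
  funext p
  simp [Complex.measurableEquivRealProd_symm_apply, Tmap_apply]

/-- Fubini over the square, `t` (first) outer. -/
lemma sq_prod_eq_ts (F : ℝ × ℝ → ℝ) (hF : Continuous F) :
    ∫ p in Set.Ico (0:ℝ) 1 ×ˢ Set.Ico (0:ℝ) 1, F p ∂(volume.prod volume)
      = ∫ t in Set.Ico (0:ℝ) 1, ∫ s in Set.Ico (0:ℝ) 1, F (t, s) :=
  setIntegral_prod F (intRect F hF)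

/-- Fubini over the square, `s` (second) outer. -/
lemma sq_prod_eq_st (F : ℝ × ℝ → ℝ) (hF : Continuous F) :
    ∫ p in Set.Ico (0:ℝ) 1 ×ˢ Set.Ico (0:ℝ) 1, F p ∂(volume.prod volume)
      = ∫ s in Set.Ico (0:ℝ) 1, ∫ t in Set.Ico (0:ℝ) 1, F (t, s) := by
  rw [sq_prod_eq_ts F hF]
  apply integral_integral_swap
  have := intRect F hF
  rwa [IntegrableOn, ← Measure.prod_restrict] at this

/-- FTC on `Ico 0 1`. -/
lemma Ico_integral_deriv (φ φ' : ℝ → ℝ) (hd : ∀ x, HasDerivAt φ (φ' x) x)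
    (hc : Continuous φ') :
    ∫ x in Set.Ico (0:ℝ) 1, φ' x = φ 1 - φ 0 := by
  rw [integral_Ico_eq_integral_Ioo, ← integral_Ioc_eq_integral_Ioo,
    ← intervalIntegral.integral_of_le zero_le_one]
  exact intervalIntegral.integral_eq_sub_of_hasDerivAt (fun x _ => hd x)
    (hc.intervalIntegrable _ _)

lemma contDiff_fderiv_apply {u : ℂ → ℝ} (hu : ContDiff ℝ (⊤ : ℕ∞) u) (v : ℂ) :
    ContDiff ℝ (⊤ : ℕ∞) (fun z => fderiv ℝ u z v) :=
  (hu.fderiv_right (by simp)).clm_apply contDiff_const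

lemma hasDerivAt_comp_line {P : ℂ → ℝ} (hP : Differentiable ℝ P) (c v : ℂ) (r : ℝ) :
    HasDerivAt (fun t : ℝ => P (c + t • v)) (fderiv ℝ P (c + r • v) v) r := by
  have h1 : HasDerivAt (fun t : ℝ => c + t • v) v r := by
    simpa using ((hasDerivAt_id r).smul_const v).const_add c
  simpa [Function.comp_def] using (hP (c + r • v)).hasFDerivAt.comp_hasDerivAt r h1

theorem stmt18 (h : ℂ → ℝ) (hsm : ContDiff ℝ (⊤ : ℕ∞) h) (hpos : ∀ z : ℂ, 0 < h z)
    (eOne eOmega : ℂ → ℂ)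
    (heOne : Differentiable ℂ eOne) (heOne0 : ∀ z : ℂ, eOne z ≠ 0)
    (heOmega : Differentiable ℂ eOmega) (heOmega0 : ∀ z : ℂ, eOmega z ≠ 0)
    (htrans1 : ∀ z : ℂ, h z = h (z + 1) * ‖eOne z‖ ^ 2)
    (htransω : ∀ z : ℂ, h z = h (z + ω) * ‖eOmega z‖ ^ 2)
    (hcocycle : ∀ z : ℂ, eOne z * eOmega (z + 1) = eOmega z * eOne (z + ω)) :
    ∃ n : ℤ,
      -(1 / (4 * Real.pi)) * ∫ z in Fdom, lap (fun w => Real.log (h w)) z = (n : ℝ) := by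
  set u : ℂ → ℝ := fun w => Real.log (h w) with hu_def
  have hu : ContDiff ℝ (⊤ : ℕ∞) u := by
    rw [contDiff_iff_contDiffAt]
    intro z
    exact (Real.contDiffAt_log.2 (hpos z).ne').comp z hsm.contDiffAt
  have hud : Differentiable ℝ u := hu.differentiable (by simp)
  -- logarithmic derivatives
  set g1 : ℂ → ℂ := fun z => deriv eOne z / eOne z with hg1_def
  set gω : ℂ → ℂ := fun z => deriv eOmega z / eOmega z with hgω_def
  -- transformation of derivatives of u
  have relGen : ∀ (lam : ℂ) (e : ℂ → ℂ), Differentiable ℂ e → (∀ z, e z ≠ 0) →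
      (∀ w, u w = u (w + lam) + 2 * Real.log (‖e w‖)) →
      ∀ z v, fderiv ℝ u (z + lam) v = fderiv ℝ u z v - 2 * (v * (deriv e z / e z)).re := by
    intro lam e he he0 htr z v
    have h1 : HasFDerivAt (fun w : ℂ => u (w + lam)) (fderiv ℝ u (z + lam)) z := by
      have := (hud (z + lam)).hasFDerivAt.comp z ((hasFDerivAt_id z).add_const lam)
      simpa [Function.comp_def] using this
    have hL := logAbs_hasFDerivAt he he0 z
    have h2 : HasFDerivAt (fun w : ℂ => u w - 2 * Real.log (‖e w‖))
        (fderiv ℝ u z - (2:ℝ) • (Complex.reCLM.comp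
          (((1 : ℂ →L[ℂ] ℂ).smulRight (deriv e z / e z)).restrictScalars ℝ))) z :=
      (hud z).hasFDerivAt.sub (hL.const_mul 2)
    have hfun : (fun w : ℂ => u (w + lam))
        = fun w => u w - 2 * Real.log (‖e w‖) := by
      funext w
      have := htr w
      linarith
    rw [hfun] at h1
    have := h1.unique h2
    rw [this]
    simp [smul_eq_mul]
  have htr1 : ∀ w, u w = u (w + 1) + 2 * Real.log (‖eOne w‖) := by
    intro w
    have habs : (0:ℝ) < ‖eOne w‖ := norm_pos_iff.mpr (heOne0 w)
    rw [hu_def]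
    simp only
    rw [htrans1 w, Real.log_mul (hpos _).ne' (pow_ne_zero 2 habs.ne'), Real.log_pow]
    push_cast
    ring
  have htrω : ∀ w, u w = u (w + ω) + 2 * Real.log (‖eOmega w‖) := by
    intro w
    have habs : (0:ℝ) < ‖eOmega w‖ := norm_pos_iff.mpr (heOmega0 w)
    rw [hu_def]
    simp only
    rw [htransω w, Real.log_mul (hpos _).ne' (pow_ne_zero 2 habs.ne'), Real.log_pow]
    push_cast
    ring
  have rel1 : ∀ z v, fderiv ℝ u (z + 1) v = fderiv ℝ u z v - 2 * (v * g1 z).re :=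
    relGen 1 eOne heOne heOne0 htr1
  have relω : ∀ z v, fderiv ℝ u (z + ω) v = fderiv ℝ u z v - 2 * (v * gω z).re :=
    relGen ω eOmega heOmega heOmega0 htrω
  -- first and second directional derivatives
  set P : ℂ → ℝ := fun z => fderiv ℝ u z 1 with hP_def
  set Q : ℂ → ℝ := fun z => fderiv ℝ u z Complex.I with hQ_def
  have hP : ContDiff ℝ (⊤ : ℕ∞) P := contDiff_fderiv_apply hu 1
  have hQ : ContDiff ℝ (⊤ : ℕ∞) Q := contDiff_fderiv_apply hu Complex.I
  have hlap_eq : lap u = fun z => fderiv ℝ P z 1 + fderiv ℝ Q z Complex.I := rfl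
  have hlapc : Continuous (lap u) := by
    rw [hlap_eq]
    exact ((contDiff_fderiv_apply hP 1).continuous).add
      ((contDiff_fderiv_apply hQ Complex.I).continuous)
  have hψc : Continuous (fun p : ℝ × ℝ => (p.1 : ℂ) + (p.2 : ℂ) * ω) := by fun_prop
  -- the three pieces
  set D1 : ℝ × ℝ → ℝ := fun p => ω.im * fderiv ℝ P ((p.1:ℂ) + (p.2:ℂ) * ω) 1 with hD1_def
  set D2 : ℝ × ℝ → ℝ := fun p => fderiv ℝ Q ((p.1:ℂ) + (p.2:ℂ) * ω) ω with hD2_def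
  set D3 : ℝ × ℝ → ℝ := fun p => -ω.re * fderiv ℝ Q ((p.1:ℂ) + (p.2:ℂ) * ω) 1 with hD3_def
  have hD1c : Continuous D1 :=
    continuous_const.mul ((contDiff_fderiv_apply hP 1).continuous.comp hψc)
  have hD2c : Continuous D2 := (contDiff_fderiv_apply hQ ω).continuous.comp hψc
  have hD3c : Continuous D3 :=
    continuous_const.mul ((contDiff_fderiv_apply hQ 1).continuous.comp hψc)
  have hsplit : (fun p : ℝ × ℝ => ω.im * lap u ((p.1:ℂ) + (p.2:ℂ) * ω))
      = fun p => D1 p + D2 p + D3 p := by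
    funext p
    have hω : (ω:ℂ) = (ω.re:ℝ) • (1:ℂ) + (ω.im:ℝ) • Complex.I := by
      simp [Complex.real_smul, Complex.re_add_im]
    have hQsplit : fderiv ℝ Q ((p.1:ℂ) + (p.2:ℂ) * ω) ω
        = ω.re * fderiv ℝ Q ((p.1:ℂ) + (p.2:ℂ) * ω) 1
          + ω.im * fderiv ℝ Q ((p.1:ℂ) + (p.2:ℂ) * ω) Complex.I := by
      conv_lhs => rw [hω]
      rw [map_add, ContinuousLinearMap.map_smul, ContinuousLinearMap.map_smul]
      simp
    have : lap u ((p.1:ℂ) + (p.2:ℂ) * ω)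
        = fderiv ℝ P ((p.1:ℂ) + (p.2:ℂ) * ω) 1
          + fderiv ℝ Q ((p.1:ℂ) + (p.2:ℂ) * ω) Complex.I := rfl
    simp only [hD1_def, hD2_def, hD3_def]
    rw [this, hQsplit]
    ring
  -- reduce to the square, and split
  have step1 : ∫ z in Fdom, lap u z
      = (∫ p in Set.Ico (0:ℝ) 1 ×ˢ Set.Ico (0:ℝ) 1, D1 p ∂(volume.prod volume))
      + (∫ p in Set.Ico (0:ℝ) 1 ×ˢ Set.Ico (0:ℝ) 1, D2 p ∂(volume.prod volume))
      + (∫ p in Set.Ico (0:ℝ) 1 ×ˢ Set.Ico (0:ℝ) 1, D3 p ∂(volume.prod volume)) := by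
    rw [integral_Fdom (lap u) hlapc]
    calc ∫ p in Set.Ico (0:ℝ) 1 ×ˢ Set.Ico (0:ℝ) 1,
          ω.im * lap u ((p.1:ℂ) + (p.2:ℂ) * ω) ∂(volume.prod volume)
        = ∫ p in Set.Ico (0:ℝ) 1 ×ˢ Set.Ico (0:ℝ) 1,
            (D1 p + D2 p + D3 p) ∂(volume.prod volume) := by rw [hsplit]
      _ = (∫ p in Set.Ico (0:ℝ) 1 ×ˢ Set.Ico (0:ℝ) 1, (D1 p + D2 p) ∂(volume.prod volume))
            + ∫ p in Set.Ico (0:ℝ) 1 ×ˢ Set.Ico (0:ℝ) 1, D3 p ∂(volume.prod volume) :=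
          integral_add (intRect _ (hD1c.add hD2c)) (intRect D3 hD3c)
      _ = _ := by rw [integral_add (intRect D1 hD1c) (intRect D2 hD2c)]
  -- continuity of logarithmic derivatives
  have hg1c : Continuous g1 :=
    ((heOne.contDiff (n := 2)).continuous_deriv (by norm_num)).div heOne.continuous heOne0
  have hgωc : Continuous gω :=
    ((heOmega.contDiff (n := 2)).continuous_deriv (by norm_num)).div heOmega.continuous heOmega0
  have hPd : Differentiable ℝ P := hP.differentiable (by simp)
  have hQd : Differentiable ℝ Q := hQ.differentiable (by simp)
  have intIco : ∀ f : ℝ → ℝ, Continuous f → IntegrableOn f (Set.Ico (0:ℝ) 1) := fun f hf =>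
    (hf.continuousOn.integrableOn_compact isCompact_Icc).mono_set Set.Ico_subset_Icc_self
  -- evaluation of the D2 integral
  have hE2 : ∫ p in Set.Ico (0:ℝ) 1 ×ˢ Set.Ico (0:ℝ) 1, D2 p ∂(volume.prod volume)
      = ∫ t in Set.Ico (0:ℝ) 1, 2 * (gω (t:ℂ)).im := by
    rw [sq_prod_eq_ts D2 hD2c]
    refine setIntegral_congr_fun measurableSet_Ico (fun t _ => ?_)
    have heq : (fun s : ℝ => D2 (t, s))
        = fun s : ℝ => fderiv ℝ Q ((t:ℂ) + s • ω) ω := by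
      funext s
      simp [hD2_def, Complex.real_smul]
    rw [heq, Ico_integral_deriv (fun s => Q ((t:ℂ) + s • ω)) _
      (fun s => hasDerivAt_comp_line hQd (t:ℂ) ω s)
      (((contDiff_fderiv_apply hQ ω).continuous).comp (by fun_prop))]
    have e1 : (t:ℂ) + (1:ℝ) • ω = (t:ℂ) + ω := by simp
    have e0 : (t:ℂ) + (0:ℝ) • ω = (t:ℂ) := by simp
    rw [e1, e0]
    have := relω (t:ℂ) Complex.I
    rw [hQ_def]
    simp only
    rw [this]
    simp [Complex.mul_re]
  -- evaluation of the D1 integral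
  have hE1 : ∫ p in Set.Ico (0:ℝ) 1 ×ˢ Set.Ico (0:ℝ) 1, D1 p ∂(volume.prod volume)
      = ∫ s in Set.Ico (0:ℝ) 1, ω.im * (-2 * (g1 ((s:ℂ) * ω)).re) := by
    rw [sq_prod_eq_st D1 hD1c]
    refine setIntegral_congr_fun measurableSet_Ico (fun s _ => ?_)
    have heq : (fun t : ℝ => D1 (t, s))
        = fun t : ℝ => ω.im * fderiv ℝ P ((s:ℂ) * ω + t • (1:ℂ)) 1 := by
      funext t
      have : (t:ℂ) + (s:ℂ) * ω = (s:ℂ) * ω + t • (1:ℂ) := by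
        rw [Complex.real_smul]; ring
      simp [hD1_def, this]
    rw [heq, integral_const_mul, Ico_integral_deriv (fun t => P ((s:ℂ) * ω + t • (1:ℂ))) _
      (fun t => hasDerivAt_comp_line hPd ((s:ℂ) * ω) 1 t)
      (((contDiff_fderiv_apply hP 1).continuous).comp (by fun_prop))]
    have e1 : (s:ℂ) * ω + (1:ℝ) • (1:ℂ) = (s:ℂ) * ω + 1 := by simp
    have e0 : (s:ℂ) * ω + (0:ℝ) • (1:ℂ) = (s:ℂ) * ω := by simp
    rw [e1, e0]
    have := rel1 ((s:ℂ) * ω) 1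
    rw [hP_def]
    simp only
    rw [this]
    simp
  -- evaluation of the D3 integral
  have hE3 : ∫ p in Set.Ico (0:ℝ) 1 ×ˢ Set.Ico (0:ℝ) 1, D3 p ∂(volume.prod volume)
      = ∫ s in Set.Ico (0:ℝ) 1, -ω.re * (2 * (g1 ((s:ℂ) * ω)).im) := by
    rw [sq_prod_eq_st D3 hD3c]
    refine setIntegral_congr_fun measurableSet_Ico (fun s _ => ?_)
    have heq : (fun t : ℝ => D3 (t, s))
        = fun t : ℝ => -ω.re * fderiv ℝ Q ((s:ℂ) * ω + t • (1:ℂ)) 1 := by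
      funext t
      have : (t:ℂ) + (s:ℂ) * ω = (s:ℂ) * ω + t • (1:ℂ) := by
        rw [Complex.real_smul]; ring
      simp [hD3_def, this]
    rw [heq, integral_const_mul, Ico_integral_deriv (fun t => Q ((s:ℂ) * ω + t • (1:ℂ))) _
      (fun t => hasDerivAt_comp_line hQd ((s:ℂ) * ω) 1 t)
      (((contDiff_fderiv_apply hQ 1).continuous).comp (by fun_prop))]
    have e1 : (s:ℂ) * ω + (1:ℝ) • (1:ℂ) = (s:ℂ) * ω + 1 := by simp
    have e0 : (s:ℂ) * ω + (0:ℝ) • (1:ℂ) = (s:ℂ) * ω := by simp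
    rw [e1, e0]
    have := rel1 ((s:ℂ) * ω) Complex.I
    rw [hQ_def]
    simp only
    rw [this]
    simp [Complex.mul_re]
  -- the complex line integrals
  set A : ℂ := ∫ t in (0:ℝ)..1,
      (1:ℂ) * (deriv eOmega ((t:ℝ) • (1:ℂ)) / eOmega ((t:ℝ) • (1:ℂ))) with hA_def
  set B : ℂ := ∫ s in (0:ℝ)..1, ω * (deriv eOne ((s:ℝ) • ω) / eOne ((s:ℝ) • ω)) with hB_def
  have hAeq : A = ∫ t in (0:ℝ)..1, gω ((t:ℝ):ℂ) := by
    rw [hA_def]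
    congr 1
    funext t
    simp [hgω_def, Complex.real_smul]
  have hAim : ∫ t in Set.Ico (0:ℝ) 1, 2 * (gω (t:ℂ)).im = 2 * A.im := by
    rw [integral_Ico_eq_integral_Ioo, ← integral_Ioc_eq_integral_Ioo,
      ← intervalIntegral.integral_of_le zero_le_one, intervalIntegral.integral_const_mul]
    congr 1
    rw [hAeq]
    have hint : IntervalIntegrable (fun t : ℝ => gω ((t:ℝ):ℂ)) volume 0 1 :=
      (hgωc.comp Complex.continuous_ofReal).intervalIntegrable _ _
    have := Complex.imCLM.intervalIntegral_comp_comm hint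
    simpa [Complex.imCLM_apply] using this
  have hBim : ∫ s in Set.Ico (0:ℝ) 1,
      (ω.im * (-2 * (g1 ((s:ℂ) * ω)).re) + -ω.re * (2 * (g1 ((s:ℂ) * ω)).im))
      = -2 * B.im := by
    have hBeq : B = ∫ s in (0:ℝ)..1, ω * g1 ((s:ℂ) * ω) := by
      simp only [hB_def, hg1_def, Complex.real_smul]
    have heq : (fun s : ℝ => ω.im * (-2 * (g1 ((s:ℂ) * ω)).re)
        + -ω.re * (2 * (g1 ((s:ℂ) * ω)).im))
        = fun s : ℝ => (-2) * (ω * g1 ((s:ℂ) * ω)).im := by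
      funext s
      simp [Complex.mul_im]
      ring
    rw [heq, integral_Ico_eq_integral_Ioo, ← integral_Ioc_eq_integral_Ioo,
      ← intervalIntegral.integral_of_le zero_le_one, intervalIntegral.integral_const_mul]
    congr 1
    rw [hBeq]
    have hint : IntervalIntegrable (fun s : ℝ => ω * g1 ((s:ℂ) * ω)) volume 0 1 :=
      (continuous_const.mul (hg1c.comp (by fun_prop))).intervalIntegrable _ _
    have := Complex.imCLM.intervalIntegral_comp_comm hint
    simpa [Complex.imCLM_apply] using this
  -- total value of the integral
  have total : ∫ z in Fdom, lap u z = 2 * A.im - 2 * B.im := by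
    rw [step1, hE2, hE1, hE3, hAim]
    have hsum : (∫ s in Set.Ico (0:ℝ) 1, ω.im * (-2 * (g1 ((s:ℂ) * ω)).re))
        + (∫ s in Set.Ico (0:ℝ) 1, -ω.re * (2 * (g1 ((s:ℂ) * ω)).im))
        = ∫ s in Set.Ico (0:ℝ) 1,
            (ω.im * (-2 * (g1 ((s:ℂ) * ω)).re) + -ω.re * (2 * (g1 ((s:ℂ) * ω)).im)) := by
      have hcont1 : Continuous (fun s : ℝ => ω.im * (-2 * (g1 ((s:ℂ) * ω)).re)) :=
        continuous_const.mul (continuous_const.mul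
          (Complex.continuous_re.comp (hg1c.comp (Complex.continuous_ofReal.mul continuous_const))))
      have hcont2 : Continuous (fun s : ℝ => -ω.re * (2 * (g1 ((s:ℂ) * ω)).im)) :=
        continuous_const.mul (continuous_const.mul
          (Complex.continuous_im.comp (hg1c.comp (Complex.continuous_ofReal.mul continuous_const))))
      rw [← integral_add (intIco _ hcont1) (intIco _ hcont2)]
    have := hBim
    linarith [hsum, hBim]
  -- exponentials of the line integrals
  have hexpA : Complex.exp A = eOmega 1 / eOmega 0 := by
    have := exp_integral_logDeriv heOmega heOmega0 1
    rw [hA_def]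
    simpa using this
  have hexpB : Complex.exp B = eOne ω / eOne 0 := by
    have := exp_integral_logDeriv heOne heOne0 ω
    rw [hB_def]
    simpa using this
  have hco := hcocycle 0
  simp only [zero_add] at hco
  have heq : Complex.exp A = Complex.exp B := by
    rw [hexpA, hexpB, div_eq_div_iff (heOmega0 0) (heOne0 0)]
    linear_combination hco
  have hone : Complex.exp (A - B) = 1 := by
    rw [Complex.exp_sub, heq, div_self (Complex.exp_ne_zero _)]
  obtain ⟨n, hn⟩ := Complex.exp_eq_one_iff.1 hone
  have him : A.im - B.im = n * (2 * Real.pi) := by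
    have := congrArg Complex.im hn
    simpa [Complex.mul_im] using this
  refine ⟨-n, ?_⟩
  rw [total]
  have hπ : Real.pi ≠ 0 := Real.pi_ne_zero
  push_cast
  field_simp
  nlinarith [him]

end
end
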